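/- Let g ∈ L^∞(𝕋) with |g| = 1 a.e. on 𝕋, and let θ be an inner function. Then θ ∈ ker T_g with C_ḡ θ = 1 if and only if g = conj(zθ) a.e. on 𝕋. Consequently, ker T_g has an inner maximal function f^M = θ if and only if ker T_g = K_{zθ}. -/

import Mathlib

open MeasureTheory Complex
open scoped Real ComplexConjugate ENNReal

noncomputable section

namespace ToeplitzKernels

/-- We model the unit circle `𝕋` as `AddCircle (2 * π)`. -/
abbrev UnitCircle := AddCircle (2 * Real.pi)

instance : Fact (0 < 2 * Real.pi) := ⟨by positivity⟩

/-- The normalised Haar (arc-length) measure on the circle. -/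
abbrev muT : Measure UnitCircle := AddCircle.haarAddCircle

/-- `L²(𝕋)`. -/
abbrev L2T := Lp ℂ 2 muT

/-- The coordinate function `z` on the circle. -/
def zf : UnitCircle → ℂ := fun x => fourier 1 x

/-- A (plain) function belongs to `H²`: it is square integrable and all its Fourier
coefficients of negative index vanish. -/
def InH2 (f : UnitCircle → ℂ) : Prop :=
  MemLp f 2 muT ∧ ∀ n : ℤ, n < 0 → fourierCoeff f n = 0

/-- `H²` as a subset of `L²`. -/
def H2 : Set L2T :=
  {u | ∀ n : ℤ, n < 0 → fourierCoeff (u : UnitCircle → ℂ) n = 0}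

/-- A function belongs to `H^∞`: it is a bounded member of `H²`. -/
def InHinf (f : UnitCircle → ℂ) : Prop :=
  InH2 f ∧ MemLp f ⊤ muT

/-- `f` is outer: `f ∈ H²` and the closed linear span of `{zⁿ f : n ≥ 0}` in `L²` is `H²`. -/
def IsOuter (f : UnitCircle → ℂ) : Prop :=
  InH2 f ∧
    closure ((Submodule.span ℂ
        {u : L2T | ∃ n : ℕ, (u : UnitCircle → ℂ) =ᵐ[muT] fun x => zf x ^ n * f x} :
          Submodule ℂ L2T) : Set L2T) = H2

/-- `f` is inner: `f ∈ H²` (hence in `H^∞`) and `|f| = 1` a.e. on `𝕋`. -/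
def IsInner (f : UnitCircle → ℂ) : Prop :=
  InH2 f ∧ ∀ᵐ x ∂muT, ‖f x‖ = 1

/-- The kernel of the Toeplitz operator `T_g`, as a subset of `L²`: those `f ∈ H²` with
`P⁺(g f) = 0`, i.e. all Fourier coefficients of `g·f` of index `≥ 0` vanish. -/
def kerT (g : UnitCircle → ℂ) : Set L2T :=
  {u | u ∈ H2 ∧ ∀ n : ℤ, 0 ≤ n →
    fourierCoeff (fun x => g x * (u : UnitCircle → ℂ) x) n = 0}

/-- Membership of (the a.e. class of) a plain function in `ker T_g`. -/
def InKerT (g f : UnitCircle → ℂ) : Prop :=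
  InH2 f ∧ ∀ n : ℤ, 0 ≤ n → fourierCoeff (fun x => g x * f x) n = 0

/-- The model space `K_θ = ker T_{θ̄}`. -/
def modelSpace (θ : UnitCircle → ℂ) : Set L2T :=
  kerT fun x => conj (θ x)

/-- `f` is a maximal function of `ker T_g`: `f ∈ H²` and `g f = z̄ Ō` a.e. on `𝕋`
for some outer `O ∈ H²` (equivalently, `ker T_g` is the smallest Toeplitz kernel
containing `f`). -/
def IsMaximal (g f : UnitCircle → ℂ) : Prop :=
  InH2 f ∧ ∃ O : UnitCircle → ℂ, IsOuter O ∧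
    (fun x => g x * f x) =ᵐ[muT] fun x => conj (zf x) * conj (O x)

/-- The set `w·S ⊆ L²`, for a set `S ⊆ L²` of square-integrable functions. -/
def mulSet (w : UnitCircle → ℂ) (S : Set L2T) : Set L2T :=
  {u | ∃ v ∈ S, (u : UnitCircle → ℂ) =ᵐ[muT] fun x => w x * (v : UnitCircle → ℂ) x}

/-- `w·S ⊆ L²(𝕋)`. -/
def mulMapsIntoL2 (w : UnitCircle → ℂ) (S : Set L2T) : Prop :=
  ∀ v ∈ S, MemLp (fun x => w x * (v : UnitCircle → ℂ) x) 2 muT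

/-- `w⁻¹·S ⊆ L²(𝕋)`. -/
def invMulMapsIntoL2 (w : UnitCircle → ℂ) (S : Set L2T) : Prop :=
  ∀ v ∈ S, MemLp (fun x => (w x)⁻¹ * (v : UnitCircle → ℂ) x) 2 muT

/-- An outer function `O` is square-rigid if `ker T_{z̄ Ō / O} = ℂ · O`. -/
def IsSquareRigidOuter (O : UnitCircle → ℂ) : Prop :=
  kerT (fun x => conj (zf x) * conj (O x) / O x)
    = {u : L2T | ∃ c : ℂ, (u : UnitCircle → ℂ) =ᵐ[muT] fun x => c * O x}

/-- `w ∈ H²` is square-rigid if the outer factor of `w` is square-rigid. -/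
def IsSquareRigid (w : UnitCircle → ℂ) : Prop :=
  ∃ I O : UnitCircle → ℂ, IsInner I ∧ IsOuter O ∧
    (w =ᵐ[muT] fun x => I x * O x) ∧ IsSquareRigidOuter O

/-- The (linear) dimension of a subset of `L²` (the rank of its linear span). -/
def setDim (S : Set L2T) : Cardinal :=
  Module.rank ℂ (Submodule.span ℂ S)

/-- The value at a point `l` of the open unit disc of the holomorphic extension of a
function `f ∈ H²` on the boundary. -/
def diskValue (f : UnitCircle → ℂ) (l : ℂ) : ℂ :=
  ∑' n : ℕ, fourierCoeff f (n : ℤ) * l ^ n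

/-- The reproducing kernel `k_λ^θ = (1 - conj (θ(λ)) θ)/(1 - λ̄ z)` (boundary values). -/
def kFun (θ : UnitCircle → ℂ) (l : ℂ) : UnitCircle → ℂ :=
  fun x => (1 - conj (diskValue θ l) * θ x) / (1 - conj l * zf x)

/-- The conjugate kernel `k̃_λ^θ = (θ - θ(λ))/(z - λ)` (boundary values). -/
def ktFun (θ : UnitCircle → ℂ) (l : ℂ) : UnitCircle → ℂ :=
  fun x => (θ x - diskValue θ l) / (zf x - l)

/-- The conjugation `C_ḡ f = ḡ z̄ f̄` associated to a unimodular symbol `g`. -/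
def conjC (g f : UnitCircle → ℂ) : UnitCircle → ℂ :=
  fun x => conj (g x) * conj (zf x) * conj (f x)

/-- `α` is a finite Blaschke product with exactly `k` zeroes in `𝔻` (with multiplicity). -/
def IsFiniteBlaschke (α : UnitCircle → ℂ) (k : ℕ) : Prop :=
  ∃ (c : ℂ) (a : Fin k → ℂ), ‖c‖ = 1 ∧ (∀ i, ‖a i‖ < 1) ∧
    α =ᵐ[muT] fun x => c * ∏ i, (zf x - a i) / (1 - conj (a i) * zf x)

lemma norm_fourier_pt (n : ℤ) (x : UnitCircle) : ‖fourier n x‖ = 1 := by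
  rw [fourier_apply]
  exact Circle.norm_coe _

lemma norm_zf (x : UnitCircle) : ‖zf x‖ = 1 := norm_fourier_pt 1 x

lemma unimod_mul_conj {z : ℂ} (h : ‖z‖ = 1) : z * conj z = 1 := by
  rw [Complex.mul_conj, Complex.normSq_eq_norm_sq, h]
  norm_num

lemma unimod_conj_mul {z : ℂ} (h : ‖z‖ = 1) : conj z * z = 1 := by
  rw [mul_comm]; exact unimod_mul_conj h

lemma fc_def (f : UnitCircle → ℂ) (n : ℤ) :
    fourierCoeff f n = ∫ x, fourier (-n) x * f x ∂muT := by
  simp [fourierCoeff, smul_eq_mul]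

lemma fc_congr {f g : UnitCircle → ℂ} (h : f =ᵐ[muT] g) (n : ℤ) :
    fourierCoeff f n = fourierCoeff g n := by
  rw [fc_def, fc_def]
  exact integral_congr_ae (h.mono fun x hx => by simp only []; rw [hx])

lemma integrable_L2 {f : UnitCircle → ℂ} (hf : MemLp f 2 muT) : Integrable f muT :=
  hf.integrable one_le_two

lemma integrable_fourier_mul {f : UnitCircle → ℂ} (hf : MemLp f 2 muT) (m : ℤ) :
    Integrable (fun x => fourier m x * f x) muT :=
  (integrable_L2 hf).bdd_mul ((fourier m).continuous.aestronglyMeasurable)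
    (c := 1) (Filter.Eventually.of_forall fun x => le_of_eq (norm_fourier_pt m x))

lemma fc_sub {f g : UnitCircle → ℂ} (hf : MemLp f 2 muT) (hg : MemLp g 2 muT) (n : ℤ) :
    fourierCoeff (fun x => f x - g x) n = fourierCoeff f n - fourierCoeff g n := by
  rw [fc_def, fc_def, fc_def]
  simp_rw [mul_sub]
  exact integral_sub (integrable_fourier_mul hf _) (integrable_fourier_mul hg _)

lemma fc_const_mul (f : UnitCircle → ℂ) (c : ℂ) (n : ℤ) :
    fourierCoeff (fun x => c * f x) n = c * fourierCoeff f n :=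
  fourierCoeff.const_mul f c n

lemma integral_fourier (m : ℤ) : (∫ x, fourier m x ∂muT) = if m = 0 then 1 else 0 := by
  have h := (orthonormal_iff_ite.mp (@orthonormal_fourier (2*Real.pi) _)) 0 m
  rw [MeasureTheory.L2.inner_def] at h
  have h2 : (∫ x, fourier m x ∂muT) = if (0:ℤ) = m then 1 else 0 := by
    rw [← h]
    apply integral_congr_ae
    filter_upwards [coeFn_fourierLp 2 0, coeFn_fourierLp 2 m] with x h0 hm
    rw [h0, hm, RCLike.inner_apply', fourier_zero, map_one, one_mul]
  rw [h2]
  rcases eq_or_ne m 0 with h3 | h3 <;> simp [h3]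
  exact fun a => absurd a.symm h3


lemma fc_fourier_mul (f : UnitCircle → ℂ) (k n : ℤ) :
    fourierCoeff (fun x => fourier k x * f x) n = fourierCoeff f (n - k) := by
  rw [fc_def, fc_def]
  refine integral_congr_ae (Filter.Eventually.of_forall fun x => ?_)
  simp only []
  rw [← mul_assoc, ← fourier_add, show -n + k = -(n - k) by ring]

lemma fc_const (c : ℂ) (n : ℤ) :
    fourierCoeff (fun _ : UnitCircle => c) n = if n = 0 then c else 0 := by
  rw [fc_def]
  rw [MeasureTheory.integral_mul_const, integral_fourier]
  rcases eq_or_ne n 0 with h | h <;> simp [h]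

lemma fc_fourier (k n : ℤ) :
    fourierCoeff (fun x : UnitCircle => (fourier k x : ℂ)) n = if n = k then 1 else 0 := by
  have h := fc_fourier_mul (fun _ : UnitCircle => (1:ℂ)) k n
  simp only [mul_one] at h
  rw [h, fc_const]
  by_cases hnk : n = k <;> simp [hnk, sub_eq_zero]

lemma fc_conj (f : UnitCircle → ℂ) (n : ℤ) :
    fourierCoeff (fun x => conj (f x)) n = conj (fourierCoeff f (-n)) := by
  rw [fc_def, fc_def, ← integral_conj]
  refine integral_congr_ae (Filter.Eventually.of_forall fun x => ?_)
  simp only []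
  rw [map_mul, ← fourier_neg, neg_neg]

lemma inner_toLp_left {v : UnitCircle → ℂ} (hv : MemLp v 2 muT) (u : L2T) :
    (inner ℂ (hv.toLp v) u : ℂ) = ∫ x, conj (v x) * (u : UnitCircle → ℂ) x ∂muT := by
  rw [MeasureTheory.L2.inner_def]
  apply integral_congr_ae
  filter_upwards [hv.coeFn_toLp] with x h1
  rw [h1, RCLike.inner_apply']

lemma ae_zero_of_fc_zero {f : UnitCircle → ℂ} (hf : MemLp f 2 muT)
    (h : ∀ n : ℤ, fourierCoeff f n = 0) : f =ᵐ[muT] fun _ => 0 := by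
  have hs := hasSum_fourier_series_L2 (hf.toLp f)
  have hz : (fun i : ℤ => fourierCoeff (⇑(hf.toLp f)) i • fourierLp (T := 2*Real.pi) 2 i)
      = fun _ => 0 := by
    funext i
    rw [fc_congr hf.coeFn_toLp, h i, zero_smul]
  rw [hz] at hs
  have h0 : hf.toLp f = 0 := (hasSum_zero.unique hs).symm
  have h1 := hf.coeFn_toLp
  rw [h0] at h1
  exact h1.symm.trans (Lp.coeFn_zero ℂ 2 muT)

lemma inner_eq_zero_of_mem_closure_span (v : L2T) (S : Set L2T)
    (h : ∀ u ∈ S, (inner ℂ v u : ℂ) = 0) {u : L2T}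
    (hu : u ∈ closure ((Submodule.span ℂ S : Submodule ℂ L2T) : Set L2T)) :
    (inner ℂ v u : ℂ) = 0 := by
  have hsub : ((Submodule.span ℂ S : Submodule ℂ L2T) : Set L2T) ⊆
      ((LinearMap.ker (innerSL ℂ v : L2T →ₗ[ℂ] ℂ) : Submodule ℂ L2T) : Set L2T) := by
    have : Submodule.span ℂ S ≤ LinearMap.ker (innerSL ℂ v : L2T →ₗ[ℂ] ℂ) := by
      rw [Submodule.span_le]
      intro w hw
      simp only [SetLike.mem_coe, LinearMap.mem_ker]
      exact h w hw
    exact this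
  have hcl : IsClosed ((LinearMap.ker (innerSL ℂ v : L2T →ₗ[ℂ] ℂ) : Submodule ℂ L2T) : Set L2T) :=
    ContinuousLinearMap.isClosed_ker (innerSL ℂ v)
  have := closure_minimal hsub hcl hu
  simpa using this

lemma zf_pow (k : ℕ) (x : UnitCircle) : zf x ^ k = fourier (k : ℤ) x := by
  induction k with
  | zero => simp [fourier_zero]
  | succ n ih =>
      rw [pow_succ, ih, zf]
      rw [show ((n+1 : ℕ) : ℤ) = (n : ℤ) + 1 by push_cast; ring, fourier_add]

lemma fc_eq_inner (u : L2T) (n : ℤ) :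
    fourierCoeff ((u : UnitCircle → ℂ)) n
      = (inner ℂ (fourierLp (T := 2*Real.pi) 2 n) u : ℂ) := by
  rw [MeasureTheory.L2.inner_def, fc_def]
  apply integral_congr_ae
  filter_upwards [coeFn_fourierLp 2 n] with x hx
  rw [hx, RCLike.inner_apply', ← fourier_neg]



lemma ae_neBot_muT : (Filter.NeBot (MeasureTheory.ae muT)) :=
  MeasureTheory.ae_neBot.mpr (IsProbabilityMeasure.ne_zero muT)

lemma ae_const_norm {c : ℂ} {f : UnitCircle → ℂ} (h : f =ᵐ[muT] fun _ => c)
    (hn : ∀ᵐ x ∂muT, ‖f x‖ = 1) : ‖c‖ = 1 := by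
  have hC : ∀ᵐ _x ∂muT, ‖c‖ = 1 := by
    filter_upwards [h, hn] with x h1 h2
    rw [← h1]; exact h2
  have := ae_neBot_muT
  exact hC.exists.choose_spec

lemma const_isOuter {c : ℂ} (hc : c ≠ 0) : IsOuter (fun _ => c) := by
  constructor
  · refine ⟨memLp_const c, fun n hn => ?_⟩
    rw [fc_const]; simp [hn.ne]
  · apply Set.Subset.antisymm
    · intro u hu n hn
      rw [fc_eq_inner]
      refine inner_eq_zero_of_mem_closure_span _ _ ?_ hu
      intro w hw
      obtain ⟨k, hk⟩ := hw
      rw [← fc_eq_inner]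
      rw [fc_congr hk n]
      have hzz : (fun x : UnitCircle => zf x ^ k * c) = fun x => fourier (k:ℤ) x * c := by
        funext x; rw [zf_pow]
      rw [hzz, fc_fourier_mul, fc_const, if_neg (by omega)]
    · intro u hu
      have hs := hasSum_fourier_series_L2 u
      set S : Set L2T :=
        {w : L2T | ∃ n : ℕ, (w : UnitCircle → ℂ) =ᵐ[muT] fun x => zf x ^ n * c} with hS
      have hmem : ∀ i : ℤ, fourierCoeff ((u : UnitCircle → ℂ)) i • fourierLp 2 i
          ∈ (Submodule.span ℂ S : Submodule ℂ L2T) := by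
        intro i
        rcases lt_or_ge i 0 with h | h
        · rw [hu i h, zero_smul]; exact Submodule.zero_mem _
        · obtain ⟨k, rfl⟩ := Int.eq_ofNat_of_zero_le h
          apply Submodule.smul_mem
          have hgen : (c • fourierLp (T := 2*Real.pi) 2 (k:ℤ)) ∈ S := by
            refine ⟨k, ?_⟩
            filter_upwards [Lp.coeFn_smul c (fourierLp (T := 2*Real.pi) 2 (k:ℤ)),
              coeFn_fourierLp 2 (k:ℤ)] with x h1 h2
            rw [h1]
            simp only [Pi.smul_apply, smul_eq_mul, h2, zf_pow]
            ring
          have heq : fourierLp (T := 2*Real.pi) 2 (k:ℤ)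
              = c⁻¹ • (c • fourierLp (T := 2*Real.pi) 2 (k:ℤ)) := by
            rw [smul_smul, inv_mul_cancel₀ hc, one_smul]
          rw [heq]
          exact Submodule.smul_mem _ _ (Submodule.subset_span hgen)
      refine mem_closure_of_tendsto hs ?_
      filter_upwards with s
      exact Submodule.sum_mem _ (fun i _ => hmem i)

lemma kerT_congr_unit {g1 g2 : UnitCircle → ℂ} {c : ℂ} (hc : c ≠ 0)
    (h : g1 =ᵐ[muT] fun x => c * g2 x) : kerT g1 = kerT g2 := by
  ext u
  have key : ∀ n : ℤ, fourierCoeff (fun x => g1 x * (u : UnitCircle → ℂ) x) n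
      = c * fourierCoeff (fun x => g2 x * (u : UnitCircle → ℂ) x) n := by
    intro n
    rw [← fc_const_mul]
    apply fc_congr
    filter_upwards [h] with x hx
    rw [hx]; ring
  constructor <;> rintro ⟨h1, h2⟩ <;> refine ⟨h1, fun n hn => ?_⟩
  · have h3 := h2 n hn
    rw [key n] at h3
    exact (mul_eq_zero.mp h3).resolve_left hc
  · rw [key n, h2 n hn, mul_zero]

lemma outer_unimod_const {O : UnitCircle → ℂ} (hO : IsOuter O)
    (hOu : ∀ᵐ x ∂muT, ‖O x‖ = 1) :
    O =ᵐ[muT] fun _ => fourierCoeff O 0 := by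
  obtain ⟨⟨hO2, hOneg⟩, hspan⟩ := hO
  have hOb : ∀ m : ℤ, MemLp (fun x => O x * fourier m x) 2 muT := by
    intro m
    refine MemLp.of_bound
      (hO2.aestronglyMeasurable.mul (fourier m).continuous.aestronglyMeasurable) 1 ?_
    filter_upwards [hOu] with x hx
    rw [norm_mul, hx, norm_fourier_pt, mul_one]
  have hconj : ∀ n : ℤ, n < 0 → fourierCoeff (fun x => conj (O x)) n = 0 := by
    intro n hn
    have h1 : MemLp (fun _ : UnitCircle => (1:ℂ)) 2 muT := memLp_const 1
    have h1H2 : h1.toLp _ ∈ H2 := by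
      intro m hm
      rw [fc_congr h1.coeFn_toLp, fc_const, if_neg hm.ne]
    rw [← hspan] at h1H2
    have hzero := inner_eq_zero_of_mem_closure_span ((hOb n).toLp _) _ ?_ h1H2
    · rw [inner_toLp_left (hOb n)] at hzero
      rw [fc_def, ← hzero]
      apply integral_congr_ae
      filter_upwards [h1.coeFn_toLp] with x hx
      rw [hx, map_mul, ← fourier_neg, mul_one, mul_comm]
    · intro w hw
      obtain ⟨k, hk⟩ := hw
      rw [inner_toLp_left (hOb n)]
      have hcalc : (fun x => conj (O x * fourier n x) * (w : UnitCircle → ℂ) x) =ᵐ[muT]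
          fun x => fourier (-n + (k:ℤ)) x := by
        filter_upwards [hk, hOu] with x hx hOx
        rw [hx, zf_pow, map_mul, ← fourier_neg]
        calc conj (O x) * fourier (-n) x * (fourier (k:ℤ) x * O x)
            = conj (O x) * O x * (fourier (-n) x * fourier (k:ℤ) x) := by ring
          _ = fourier (-n + (k:ℤ)) x := by
              rw [unimod_conj_mul hOx, one_mul, ← fourier_add]
      rw [integral_congr_ae hcalc, integral_fourier, if_neg (by omega)]
  have hOpos : ∀ n : ℤ, 0 < n → fourierCoeff O n = 0 := by
    intro n hn
    have h := fc_conj (fun x => conj (O x)) n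
    simp only [Complex.conj_conj] at h
    rw [h, hconj (-n) (by omega), map_zero]
  set c := fourierCoeff O 0 with hcdef
  have hz := ae_zero_of_fc_zero (f := fun x => O x - c) (hO2.sub (memLp_const c)) ?_
  · filter_upwards [hz] with x hx
    have : O x - c = 0 := hx
    simpa [sub_eq_zero] using this
  · intro n
    rw [fc_sub hO2 (memLp_const c), fc_const]
    rcases lt_trichotomy n 0 with h | h | h
    · rw [hOneg n h, if_neg h.ne, sub_zero]
    · subst h; simp [hcdef]
    · rw [hOpos n h, if_neg h.ne', sub_zero]


lemma fc_zf_mul (f : UnitCircle → ℂ) (n : ℤ) :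
    fourierCoeff (fun x => zf x * f x) n = fourierCoeff f (n - 1) := by
  have h : (fun x => zf x * f x) = fun x => fourier (1:ℤ) x * f x := rfl
  rw [h, fc_fourier_mul]

/-- For unimodular `g` and inner `θ`: `θ ∈ ker T_g` with `C_ḡ θ = 1` iff
`g = conj(zθ)` a.e.; consequently `ker T_g` has the inner maximal function `θ` iff
`ker T_g = K_{zθ}`. -/
theorem inner_maximal_function_iff
    (g θ : UnitCircle → ℂ) (hg : MemLp g ⊤ muT)
    (hgu : ∀ᵐ x ∂muT, ‖g x‖ = 1) (hθ : IsInner θ) :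
    ((InKerT g θ ∧ conjC g θ =ᵐ[muT] fun _ => (1 : ℂ)) ↔
        g =ᵐ[muT] fun x => conj (zf x * θ x)) ∧
    (IsMaximal g θ ↔ kerT g = modelSpace fun x => zf x * θ x) := by
  obtain ⟨hθ2, hθu⟩ := hθ
  have hθm := hθ2.1
  constructor
  · constructor
    · rintro ⟨-, hC⟩
      filter_upwards [hC, hθu] with x h1 h3
      have h4 : g x * zf x * θ x = 1 := by
        have h1' : conj (g x) * conj (zf x) * conj (θ x) = 1 := h1
        have h5 := congrArg (starRingEnd ℂ) h1'
        simpa [map_mul, map_one, Complex.conj_conj] using h5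
      have hz1 : zf x * conj (zf x) = 1 := unimod_mul_conj (norm_zf x)
      have hθ1 : θ x * conj (θ x) = 1 := unimod_mul_conj h3
      calc g x = g x * ((zf x * conj (zf x)) * (θ x * conj (θ x))) := by
            rw [hz1, hθ1]; norm_num
        _ = (g x * zf x * θ x) * (conj (zf x) * conj (θ x)) := by ring
        _ = conj (zf x * θ x) := by rw [h4, one_mul, map_mul]
    · intro hgc
      refine ⟨⟨hθ2, fun n hn => ?_⟩, ?_⟩
      · have heq : (fun x => g x * θ x) =ᵐ[muT] fun x => fourier (-1:ℤ) x := by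
          filter_upwards [hgc, hθu] with x h1 h2
          rw [h1, map_mul, mul_assoc, unimod_conj_mul h2, mul_one, fourier_neg]
          rfl
        exact (fc_congr heq n).trans (by rw [fc_fourier, if_neg (by omega)])
      · filter_upwards [hgc, hθu] with x h1 h2
        show conj (g x) * conj (zf x) * conj (θ x) = 1
        rw [h1, Complex.conj_conj]
        calc zf x * θ x * conj (zf x) * conj (θ x)
            = (zf x * conj (zf x)) * (θ x * conj (θ x)) := by ring
          _ = 1 := by rw [unimod_mul_conj (norm_zf x), unimod_mul_conj h2, one_mul]
  · constructor
    · rintro ⟨-, O, hO, heqm⟩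
      have hOu : ∀ᵐ x ∂muT, ‖O x‖ = 1 := by
        filter_upwards [heqm, hgu, hθu] with x h1 h2 h3
        have h4 : ‖g x * θ x‖ = 1 := by rw [norm_mul, h2, h3, mul_one]
        rw [h1, norm_mul, RCLike.norm_conj, RCLike.norm_conj, norm_zf, one_mul] at h4
        exact h4
      have hconst := outer_unimod_const hO hOu
      have hcu : ‖fourierCoeff O 0‖ = 1 := ae_const_norm hconst hOu
      have hcne : fourierCoeff O 0 ≠ 0 := by
        intro h; rw [h] at hcu; simp at hcu
      have hge : g =ᵐ[muT] fun x => conj (fourierCoeff O 0) * conj (zf x * θ x) := by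
        filter_upwards [heqm, hθu, hconst] with x h1 h2 h3
        have h3' : O x = fourierCoeff O 0 := h3
        have hθ1 : θ x * conj (θ x) = 1 := unimod_mul_conj h2
        calc g x = g x * θ x * conj (θ x) := by rw [mul_assoc, hθ1, mul_one]
          _ = conj (zf x) * conj (O x) * conj (θ x) := by rw [h1]
          _ = conj (fourierCoeff O 0) * conj (zf x * θ x) := by rw [h3', map_mul]; ring
      exact kerT_congr_unit (by simpa using hcne) hge
    · intro hker
      have hθL : hθm.toLp θ ∈ modelSpace (fun x => zf x * θ x) := by
        refine ⟨fun n hn => ?_, fun n hn => ?_⟩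
        · exact (fc_congr hθm.coeFn_toLp n).trans (hθ2.2 n hn)
        · have heq1 : (fun x => conj (zf x * θ x) * ((hθm.toLp θ : L2T) : UnitCircle → ℂ) x)
              =ᵐ[muT] fun x => fourier (-1:ℤ) x := by
            filter_upwards [hθm.coeFn_toLp, hθu] with x h1 h2
            rw [h1, map_mul, mul_assoc, unimod_conj_mul h2, mul_one, fourier_neg]
            rfl
          exact (fc_congr heq1 n).trans (by rw [fc_fourier, if_neg (by omega)])
      rw [← hker] at hθL
      have hθk : ∀ n : ℤ, 0 ≤ n → fourierCoeff (fun x => g x * θ x) n = 0 := by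
        intro n hn
        refine Eq.trans ?_ (hθL.2 n hn)
        apply fc_congr
        filter_upwards [hθm.coeFn_toLp] with x hx
        rw [hx]
      have h1m : MemLp (fun _ : UnitCircle => (1:ℂ)) 2 muT := memLp_const 1
      have h1L : h1m.toLp _ ∈ modelSpace (fun x => zf x * θ x) := by
        refine ⟨fun n hn => ?_, fun n hn => ?_⟩
        · exact (fc_congr h1m.coeFn_toLp n).trans (by rw [fc_const, if_neg hn.ne])
        · have heq1 : (fun x => conj (zf x * θ x) * ((h1m.toLp _ : L2T) : UnitCircle → ℂ) x)
              =ᵐ[muT] fun x => conj (zf x * θ x) := by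
            filter_upwards [h1m.coeFn_toLp] with x hx
            rw [hx, mul_one]
          refine (fc_congr heq1 n).trans ?_
          rw [fc_conj, fc_zf_mul, hθ2.2 _ (by omega), map_zero]
      rw [← hker] at h1L
      have hg0 : ∀ n : ℤ, 0 ≤ n → fourierCoeff g n = 0 := by
        intro n hn
        refine Eq.trans ?_ (h1L.2 n hn)
        apply fc_congr
        filter_upwards [h1m.coeFn_toLp] with x hx
        rw [hx, mul_one]
      set H : UnitCircle → ℂ := fun x => conj (zf x * g x * θ x) with hHdef
      have hHu : ∀ᵐ x ∂muT, ‖H x‖ = 1 := by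
        filter_upwards [hgu, hθu] with x h1 h2
        simp only [hHdef, RCLike.norm_conj, norm_mul, norm_zf, h1, h2, one_mul, mul_one]
      have hHmeas : AEStronglyMeasurable H muT := by
        have hP : AEStronglyMeasurable (fun x => zf x * g x * θ x) muT :=
          ((fourier 1).continuous.aestronglyMeasurable.mul hg.aestronglyMeasurable).mul
            hθm.aestronglyMeasurable
        exact RCLike.continuous_conj.comp_aestronglyMeasurable hP
      have hHmem : MemLp H 2 muT := MemLp.of_bound hHmeas 1 (hHu.mono fun x hx => hx.le)
      have hHneg : ∀ n : ℤ, n < 0 → fourierCoeff H n = 0 := by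
        intro n hn
        have hsh : H = fun x => conj (zf x * (g x * θ x)) := by
          funext x; simp only [hHdef, mul_assoc]
        rw [hsh, fc_conj, fc_zf_mul, hθk _ (by omega), map_zero]
      set c : ℂ := fourierCoeff H 0 with hcdef
      set w : UnitCircle → ℂ := fun x => θ x * (H x - c) with hwdef
      have hwmeas : AEStronglyMeasurable w muT :=
        hθm.aestronglyMeasurable.mul (hHmeas.sub aestronglyMeasurable_const)
      have hwmem : MemLp w 2 muT := by
        refine MemLp.of_bound hwmeas (1 + ‖c‖) ?_
        filter_upwards [hθu, hHu] with x h1 h2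
        simp only [hwdef]
        rw [norm_mul, h1, one_mul]
        calc ‖H x - c‖ ≤ ‖H x‖ + ‖c‖ := norm_sub_le _ _
          _ = 1 + ‖c‖ := by rw [h2]
      have hθH : MemLp (fun x => θ x * H x) 2 muT := by
        refine MemLp.of_bound (hθm.aestronglyMeasurable.mul hHmeas) 1 ?_
        filter_upwards [hθu, hHu] with x h1 h2
        rw [norm_mul, h1, h2, mul_one]
      have hgθmeas : AEStronglyMeasurable (fun x => g x * θ x) muT :=
        hg.aestronglyMeasurable.mul hθm.aestronglyMeasurable
      have hgθmem : MemLp (fun x => g x * θ x) 2 muT := by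
        refine MemLp.of_bound hgθmeas 1 ?_
        filter_upwards [hgu, hθu] with x h1 h2
        rw [norm_mul, h1, h2, mul_one]
      have hgθH : MemLp (fun x => g x * θ x * H x) 2 muT := by
        refine MemLp.of_bound (hgθmeas.mul hHmeas) 1 ?_
        filter_upwards [hgu, hθu, hHu] with x h1 h2 h3
        rw [norm_mul, norm_mul, h1, h2, h3]; norm_num
      have hwL : hwmem.toLp w ∈ kerT g := by
        refine ⟨fun n hn => ?_, fun n hn => ?_⟩
        · refine (fc_congr hwmem.coeFn_toLp n).trans ?_
          have hsplit : fourierCoeff w n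
              = fourierCoeff (fun x => θ x * H x) n - c * fourierCoeff θ n := by
            rw [← fc_const_mul θ c n, ← fc_sub hθH (hθm.const_mul c) n]
            apply fc_congr
            refine Filter.Eventually.of_forall fun x => ?_
            simp only [hwdef]; ring
          rw [hsplit]
          have hθHe : (fun x => θ x * H x) =ᵐ[muT] fun x => conj (zf x * g x) := by
            filter_upwards [hθu] with x hx
            simp only [hHdef]
            calc θ x * conj (zf x * g x * θ x)
                = conj (zf x * g x) * (θ x * conj (θ x)) := by
                  rw [map_mul (starRingEnd ℂ) (zf x * g x) (θ x)]; ring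
              _ = conj (zf x * g x) := by rw [unimod_mul_conj hx, mul_one]
          rw [fc_congr hθHe, fc_conj, fc_zf_mul, hg0 _ (by omega), map_zero,
            hθ2.2 n hn, mul_zero, sub_zero]
        · have hsplit : fourierCoeff (fun x => g x * ((hwmem.toLp w : L2T) : UnitCircle → ℂ) x) n
              = fourierCoeff (fun x => g x * θ x * H x) n
                - c * fourierCoeff (fun x => g x * θ x) n := by
            rw [← fc_const_mul _ c n, ← fc_sub hgθH (hgθmem.const_mul c) n]
            apply fc_congr
            filter_upwards [hwmem.coeFn_toLp] with x hx
            rw [hx]; simp only [hwdef]; ring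
          refine hsplit.trans ?_
          rw [hθk n hn, mul_zero, sub_zero]
          have he : (fun x => g x * θ x * H x) =ᵐ[muT] fun x => fourier (-1:ℤ) x := by
            filter_upwards [hgu, hθu] with x h1 h2
            simp only [hHdef]
            have hgt : ‖g x * θ x‖ = 1 := by rw [norm_mul, h1, h2, mul_one]
            calc g x * θ x * conj (zf x * g x * θ x)
                = (g x * θ x * conj (g x * θ x)) * conj (zf x) := by
                  rw [show zf x * g x * θ x = zf x * (g x * θ x) by ring, map_mul]
                  ring
              _ = conj (zf x) := by rw [unimod_mul_conj hgt, one_mul]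
              _ = fourier (-1:ℤ) x := by rw [fourier_neg]; rfl
          rw [fc_congr he, fc_fourier, if_neg (by omega)]
      rw [hker] at hwL
      have hHpos : ∀ m : ℤ, 1 ≤ m → fourierCoeff H m = 0 := by
        intro m hm
        have h := hwL.2 (m - 1) (by omega)
        have he2 : (fun x => conj (zf x * θ x) * ((hwmem.toLp w : L2T) : UnitCircle → ℂ) x)
            =ᵐ[muT] fun x => fourier (-1:ℤ) x * (H x - c) := by
          filter_upwards [hwmem.coeFn_toLp, hθu] with x h1 h2
          rw [h1]
          simp only [hwdef]
          rw [map_mul]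
          calc conj (zf x) * conj (θ x) * (θ x * (H x - c))
              = (conj (θ x) * θ x) * (conj (zf x) * (H x - c)) := by ring
            _ = conj (zf x) * (H x - c) := by rw [unimod_conj_mul h2, one_mul]
            _ = fourier (-1:ℤ) x * (H x - c) := by rw [fourier_neg]; rfl
        have h2 := (fc_congr he2 (m - 1)).symm.trans h
        rw [fc_fourier_mul, show m - 1 - (-1) = m by ring,
          fc_sub hHmem (memLp_const c), fc_const, if_neg (by omega), sub_zero] at h2
        exact h2
      have hHconst : H =ᵐ[muT] fun _ => c := by
        have hz := ae_zero_of_fc_zero (f := fun x => H x - c) (hHmem.sub (memLp_const c)) ?_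
        · filter_upwards [hz] with x hx
          have hx' : H x - c = 0 := hx
          simpa [sub_eq_zero] using hx'
        · intro n
          rw [fc_sub hHmem (memLp_const c), fc_const]
          rcases lt_trichotomy n 0 with h | h | h
          · rw [hHneg n h, if_neg h.ne, sub_zero]
          · subst h; rw [if_pos rfl, ← hcdef, sub_self]
          · rw [hHpos n (by omega), if_neg h.ne', sub_zero]
      have hcu : ‖c‖ = 1 := ae_const_norm hHconst hHu
      refine ⟨hθ2, fun _ => c, const_isOuter (fun h0 => by rw [h0] at hcu; simp at hcu), ?_⟩
      filter_upwards [hHconst] with x h3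
      have h3' : H x = c := h3
      have h4 : conj (H x) = zf x * (g x * θ x) := by
        simp only [hHdef, Complex.conj_conj]; ring
      have hz1 : conj (zf x) * zf x = 1 := unimod_conj_mul (norm_zf x)
      calc g x * θ x = conj (zf x) * (zf x * (g x * θ x)) := by
            rw [← mul_assoc, hz1, one_mul]
        _ = conj (zf x) * conj (H x) := by rw [h4]
        _ = conj (zf x) * conj ((fun _ : UnitCircle => c) x) := by rw [h3']


end ToeplitzKernels
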